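/- arXiv:2202.06522 — 2 statements merged into one kernel-verified Lean document; each statement's English description precedes it below -/
import Mathlib

section
/- Let S be a semigroup of Hénon maps, R > R_S, and C ⊂ C² compact. Then there exists k_C ≥ 1 such that h(C) ⊆ V_R ∪ int(V_R^+) for every h ∈ G_k with k ≥ k_C, and there exists k'_C with h^{-1}(C) ⊆ V_R ∪ int(V_R^-) for every h ∈ G_k, k ≥ k'_C. -/
/-!
A generalized Hénon map `(x, y) ↦ (y, p y - a x)` with `deg p ≥ 2` satisfies
`‖p y‖ ≥ (2‖a‖ + 2)‖y‖` for large `y`, so beyond some scale it maps `V_R^+` into `V_{2R}^+`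
and pulls `V_R^-` back into `V_{2R}^-`. These two properties compose, so a word of length `k`
does the same with factor `2^k`. Every point outside `V_R` lies in `int V_R^+` or in `V_R^-`;
if a long word sent a point of `C` into `V_R^-`, that point would lie in `V_{2^k R}^-`, beyond
the bounded set `C`. Inverse words are handled symmetrically, with the roles of `V^±` swapped.
-/

open Filter Metric Set Bornology

noncomputable section

/-- A generalized Hénon map of ℂ²: `H (x,y) = (y, p(y) - a x)` with `a ≠ 0` and
`deg p = d ≥ 2`. -/
def IsGenHenonDeg (h : ℂ × ℂ → ℂ × ℂ) (d : ℕ) : Prop :=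
  ∃ (a : ℂ) (p : Polynomial ℂ), a ≠ 0 ∧ 2 ≤ p.natDegree ∧ p.natDegree = d ∧
    ∀ x y : ℂ, h (x, y) = (y, p.eval y - a * x)

/-- A Hénon map of degree `d`: a finite (nonempty) composition of generalized
Hénon maps, `d` being the product of the degrees of the factors. -/
def IsHenonDeg (h : ℂ × ℂ → ℂ × ℂ) (d : ℕ) : Prop :=
  ∃ l : List ((ℂ × ℂ → ℂ × ℂ) × ℕ), l ≠ [] ∧
    (∀ gd ∈ l, IsGenHenonDeg gd.1 gd.2) ∧
    h = (l.map Prod.fst).foldr (· ∘ ·) id ∧ d = (l.map Prod.snd).prod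

def IsHenon (h : ℂ × ℂ → ℂ × ℂ) : Prop := ∃ d, IsHenonDeg h d

/-- The polydisk `V_R = {max(|x|,|y|) ≤ R}`. -/
def VR (R : ℝ) : Set (ℂ × ℂ) := {z | max ‖z.1‖ ‖z.2‖ ≤ R}

/-- `V_R^+ = {|y| ≥ max(|x|, R)}`. -/
def VRp (R : ℝ) : Set (ℂ × ℂ) := {z | max ‖z.1‖ R ≤ ‖z.2‖}

/-- `V_R^- = {|x| ≥ max(|y|, R)}`. -/
def VRm (R : ℝ) : Set (ℂ × ℂ) := {z | max ‖z.2‖ R ≤ ‖z.1‖}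

/-- The element of the semigroup given by the word `w`:
`H_{w 0} ∘ H_{w 1} ∘ ⋯ ∘ H_{w (k-1)}`. -/
def wordProd {n : ℕ} (H : Fin n → Equiv.Perm (ℂ × ℂ)) {k : ℕ}
    (w : Fin k → Fin n) : Equiv.Perm (ℂ × ℂ) :=
  (List.ofFn fun j => H (w j)).prod


open Polynomial in
theorem Polynomial.exists_mul_norm_le_norm_eval {𝕜 : Type*} [NormedField 𝕜] (p : 𝕜[X])
    (hp : 2 ≤ p.natDegree) (c : ℝ) : ∃ S, ∀ t : 𝕜, S ≤ ‖t‖ → c * ‖t‖ ≤ ‖p.eval t‖ := by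
  have hq : 0 < p.divX.degree :=
    natDegree_pos_iff_degree_pos.mp (by rw [natDegree_divX_eq_natDegree_tsub_one]; omega)
  have hlarge : ∀ᶠ t in comap norm atTop, c + ‖p.coeff 0‖ ≤ ‖p.divX.eval t‖ ∧ 1 ≤ ‖t‖ :=
    ((p.divX.tendsto_norm_atTop hq tendsto_comap).eventually_ge_atTop _).and
      (tendsto_comap.eventually_ge_atTop 1)
  obtain ⟨S, hS⟩ := eventually_atTop.1 (eventually_comap.1 hlarge)
  refine ⟨S, fun t ht => ?_⟩
  obtain ⟨hqt, ht1⟩ := hS ‖t‖ ht t rfl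
  have hsplit : p.eval t = t * p.divX.eval t + p.coeff 0 := by
    conv_lhs => rw [← X_mul_divX_add p]
    rw [eval_add, eval_mul, eval_X, eval_C]
  have htriangle := norm_sub_le (p.eval t) (p.coeff 0)
  rw [hsplit, add_sub_cancel_right, norm_mul, ← hsplit] at htriangle
  calc c * ‖t‖ ≤ ‖t‖ * (c + ‖p.coeff 0‖) - ‖p.coeff 0‖ := by nlinarith [norm_nonneg (p.coeff 0)]
    _ ≤ ‖t‖ * ‖p.divX.eval t‖ - ‖p.coeff 0‖ := by gcongr
    _ ≤ ‖p.eval t‖ := by linarith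

theorem VRp_antitone : Antitone VRp := fun _ _ h _ hz => (max_le_max le_rfl h).trans hz

theorem VRm_antitone : Antitone VRm := fun _ _ h _ hz => (max_le_max le_rfl h).trans hz

def ExpandsFiltration (g : ℂ × ℂ → ℂ × ℂ) (S c : ℝ) : Prop :=
  ∀ R, S ≤ R → MapsTo g (VRp R) (VRp (c * R)) ∧ g ⁻¹' VRm R ⊆ VRm (c * R)

namespace ExpandsFiltration

variable {g g' : ℂ × ℂ → ℂ × ℂ} {S S' a b c : ℝ}

theorem mono (hg : ExpandsFiltration g S c) (hS : S ≤ S') : ExpandsFiltration g S' c :=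
  fun R hR => hg R (hS.trans hR)

theorem mono_factor (hg : ExpandsFiltration g S c) (hS : 0 ≤ S) (hc : a ≤ c) :
    ExpandsFiltration g S a := by
  intro R hR
  have hscale : a * R ≤ c * R := mul_le_mul_of_nonneg_right hc (hS.trans hR)
  exact ⟨(hg R hR).1.mono_right (VRp_antitone hscale),
    (hg R hR).2.trans (VRm_antitone hscale)⟩

theorem id (S : ℝ) : ExpandsFiltration id S 1 := by
  intro R _
  simp only [one_mul]
  exact ⟨mapsTo_id _, subset_rfl⟩

theorem comp (hg : ExpandsFiltration g S a) (hg' : ExpandsFiltration g' S b) (hS : 0 ≤ S)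
    (ha : 1 ≤ a) (hb : 1 ≤ b) : ExpandsFiltration (g ∘ g') S (a * b) := by
  intro R hR
  have hR0 : 0 ≤ R := hS.trans hR
  refine ⟨?_, ?_⟩
  · rw [mul_assoc]
    exact (hg _ (hR.trans (le_mul_of_one_le_left hR0 hb))).1.comp (hg' R hR).1
  · rw [preimage_comp, mul_comm a, mul_assoc]
    exact (preimage_mono (hg R hR).2).trans (hg' _ (hR.trans (le_mul_of_one_le_left hR0 ha))).2

end ExpandsFiltration

theorem IsGenHenonDeg.expandsFiltration {g : ℂ × ℂ → ℂ × ℂ} {d : ℕ} (hg : IsGenHenonDeg g d) :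
    ∃ S, 0 ≤ S ∧ ExpandsFiltration g S 2 := by
  obtain ⟨a, p, ha, hdeg, -, hform⟩ := hg
  have ha0 : 0 < ‖a‖ := norm_pos_iff.mpr ha
  obtain ⟨S, hS⟩ := p.exists_mul_norm_le_norm_eval hdeg (2 * ‖a‖ + 2)
  refine ⟨max S 0, le_max_right _ _, fun R hR => ⟨?_, ?_⟩⟩
  all_goals
    rintro ⟨x, y⟩ hz
    simp only [mem_preimage, VRp, VRm, mem_ofPred_eq, hform] at hz ⊢
    have hyR : R ≤ ‖y‖ := (le_max_right _ _).trans hz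
    have hpy := hS y ((le_max_left _ _).trans (hR.trans hyR))
    have hax : ‖p.eval y‖ - ‖a‖ * ‖x‖ ≤ ‖p.eval y - a * x‖ := norm_mul a x ▸ norm_sub_norm_le _ _
    have hy0 := norm_nonneg y
  · have hxy : ‖x‖ ≤ ‖y‖ := (le_max_left _ _).trans hz
    have : 2 * ‖y‖ ≤ ‖p.eval y - a * x‖ := by nlinarith
    exact max_le (by linarith) (by linarith)
  · have hpxy : ‖p.eval y - a * x‖ ≤ ‖y‖ := (le_max_left _ _).trans hz
    have : ‖a‖ * (2 * ‖y‖) ≤ ‖a‖ * ‖x‖ := by nlinarith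
    have h2y := le_of_mul_le_mul_left this ha0
    exact max_le (by linarith) (by linarith)

theorem expandsFiltration_foldr_comp (l : List ((ℂ × ℂ → ℂ × ℂ) × ℕ))
    (hl : ∀ gd ∈ l, IsGenHenonDeg gd.1 gd.2) :
    ∃ S, 0 ≤ S ∧ ExpandsFiltration ((l.map Prod.fst).foldr (· ∘ ·) id) S (2 ^ l.length) := by
  induction l with
  | nil => exact ⟨0, le_rfl, ExpandsFiltration.id 0⟩
  | cons g l ih =>
    obtain ⟨S₁, hS₁, hg⟩ := (hl g List.mem_cons_self).expandsFiltration
    obtain ⟨S₂, hS₂, hl'⟩ := ih fun gd hgd => hl gd (List.mem_cons_of_mem _ hgd)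
    refine ⟨max S₁ S₂, le_max_of_le_left hS₁, ?_⟩
    rw [List.length_cons, pow_succ']
    exact (hg.mono (le_max_left _ _)).comp (hl'.mono (le_max_right _ _))
      (le_max_of_le_left hS₁) one_le_two (one_le_pow₀ one_le_two)

theorem IsHenon.expandsFiltration {h : ℂ × ℂ → ℂ × ℂ} (hh : IsHenon h) :
    ∃ S, 0 ≤ S ∧ ExpandsFiltration h S 2 := by
  obtain ⟨-, l, hl0, hlg, rfl, -⟩ := hh
  obtain ⟨S, hS, hexp⟩ := expandsFiltration_foldr_comp l hlg
  have hlen : 2 ≤ (2 : ℝ) ^ l.length :=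
    le_self_pow₀ one_le_two (List.length_pos_iff.mpr hl0).ne'
  exact ⟨S, hS, hexp.mono_factor hS hlen⟩

theorem wordProd_succ {n k : ℕ} (H : Fin n → Equiv.Perm (ℂ × ℂ)) (w : Fin (k + 1) → Fin n) :
    wordProd H w = H (w 0) * wordProd H (fun j => w j.succ) := by
  simp [wordProd, List.ofFn_succ]

theorem expandsFiltration_wordProd {n : ℕ} {H : Fin n → Equiv.Perm (ℂ × ℂ)} {S c : ℝ}
    (hH : ∀ i, ExpandsFiltration (H i) S c) (hS : 0 ≤ S) (hc : 1 ≤ c) :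
    ∀ {k : ℕ} (w : Fin k → Fin n), ExpandsFiltration (wordProd H w) S (c ^ k)
  | 0, w => by simpa [wordProd] using ExpandsFiltration.id S
  | k + 1, w => by
    rw [wordProd_succ, Equiv.Perm.coe_mul, pow_succ']
    exact (hH _).comp (expandsFiltration_wordProd hH hS hc _) hS hc (one_le_pow₀ hc)

theorem le_norm_of_mem_VRp {R : ℝ} {z : ℂ × ℂ} (hz : z ∈ VRp R) : R ≤ ‖z‖ :=
  ((le_max_right _ _).trans hz).trans (norm_snd_le z)

theorem le_norm_of_mem_VRm {R : ℝ} {z : ℂ × ℂ} (hz : z ∈ VRm R) : R ≤ ‖z‖ :=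
  ((le_max_right _ _).trans hz).trans (norm_fst_le z)

theorem mem_VR_or_mem_interior_VRp_or_mem_VRm (R : ℝ) (z : ℂ × ℂ) :
    z ∈ VR R ∨ z ∈ interior (VRp R) ∨ z ∈ VRm R := by
  by_cases hy : max ‖z.1‖ R < ‖z.2‖
  · have hsub : {v : ℂ × ℂ | max ‖v.1‖ R < ‖v.2‖} ⊆ VRp R := fun v hv => show max ‖v.1‖ R ≤ ‖v.2‖ from le_of_lt hv
    exact Or.inr (Or.inl (interior_maximal hsub (isOpen_lt (by fun_prop) (by fun_prop)) hy))
  · push Not at hy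
    rcases le_or_gt ‖z.1‖ R with hx | hx
    · exact Or.inl (max_le hx (hy.trans (max_le hx le_rfl)))
    · exact Or.inr (Or.inr (max_le (hy.trans (max_le le_rfl hx.le)) hx.le))

theorem mem_VR_or_mem_interior_VRm_or_mem_VRp (R : ℝ) (z : ℂ × ℂ) :
    z ∈ VR R ∨ z ∈ interior (VRm R) ∨ z ∈ VRp R := by
  have hVR : Prod.swap ⁻¹' VR R = VR R := by ext; simp only [VR, mem_preimage, mem_ofPred_eq, Prod.fst_swap, Prod.snd_swap, max_comm]
  have hVRm : VRm R = Homeomorph.prodComm ℂ ℂ ⁻¹' VRp R := rfl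
  rw [hVRm, ← Homeomorph.preimage_interior, ← hVR]
  exact mem_VR_or_mem_interior_VRp_or_mem_VRm R z.swap

theorem ExpandsFiltration.image_subset {g : ℂ × ℂ → ℂ × ℂ} {S c R : ℝ}
    (hg : ExpandsFiltration g S c) (hR : S ≤ R) {C : Set (ℂ × ℂ)}
    (hC : ∀ z ∈ C, ‖z‖ < c * R) : g '' C ⊆ VR R ∪ interior (VRp R) := by
  rintro _ ⟨z, hz, rfl⟩
  rcases mem_VR_or_mem_interior_VRp_or_mem_VRm R (g z) with h | h | h
  · exact Or.inl h
  · exact Or.inr h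
  · exact absurd (hC z hz) (le_norm_of_mem_VRm ((hg R hR).2 h)).not_gt

theorem ExpandsFiltration.inv_image_subset {g : Equiv.Perm (ℂ × ℂ)} {S c R : ℝ}
    (hg : ExpandsFiltration g S c) (hR : S ≤ R) {C : Set (ℂ × ℂ)}
    (hC : ∀ z ∈ C, ‖z‖ < c * R) : ⇑g⁻¹ '' C ⊆ VR R ∪ interior (VRm R) := by
  rintro _ ⟨z, hz, rfl⟩
  rcases mem_VR_or_mem_interior_VRm_or_mem_VRp R (g⁻¹ z) with h | h | h
  · exact Or.inl h
  · exact Or.inr h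
  · have hgz := (hg R hR).1 h
    rw [Equiv.Perm.coe_inv, Equiv.apply_symm_apply] at hgz
    exact absurd (hC z hz) (le_norm_of_mem_VRp hgz).not_gt

theorem compact_absorption_general (n : ℕ)
    (H : Fin n → Equiv.Perm (ℂ × ℂ)) (hH : ∀ i, IsHenon ⇑(H i)) :
    ∃ RS > (0 : ℝ), ∀ R > RS, ∀ C : Set (ℂ × ℂ), IsCompact C →
      (∃ kC : ℕ, 1 ≤ kC ∧ ∀ k ≥ kC, ∀ w : Fin k → Fin n,
        ⇑(wordProd H w) '' C ⊆ VR R ∪ interior (VRp R)) ∧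
      (∃ kC' : ℕ, 1 ≤ kC' ∧ ∀ k ≥ kC', ∀ w : Fin k → Fin n,
        ⇑(wordProd H w)⁻¹ '' C ⊆ VR R ∪ interior (VRm R)) := by
  choose S hS0 hS using fun i => (hH i).expandsFiltration
  obtain ⟨S₀, hS₀⟩ := Finite.exists_le S
  have hexp : ∀ i, ExpandsFiltration (H i) (max S₀ 1) 2 :=
    fun i => (hS i).mono ((hS₀ i).trans (le_max_left _ _))
  refine ⟨max S₀ 1, zero_lt_one.trans_le (le_max_right _ _), fun R hR C hC => ?_⟩
  obtain ⟨ρ, hρ⟩ := isBounded_iff_forall_norm_le.mp hC.isBounded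
  have hR0 : 0 < R := zero_lt_one.trans (lt_of_le_of_lt (le_max_right _ _) hR)
  have hlarge : ∀ᶠ k : ℕ in atTop, 1 ≤ k ∧ ∀ z ∈ C, ‖z‖ < 2 ^ k * R :=
    (eventually_ge_atTop 1).and <|
      (((tendsto_pow_atTop_atTop_of_one_lt one_lt_two).atTop_mul_const hR0).eventually_gt_atTop
        ρ).mono fun k hk z hz => (hρ z hz).trans_lt hk
  obtain ⟨kC, hkC⟩ := eventually_atTop.1 hlarge
  have hwords : ∀ {k} (w : Fin k → Fin n), ExpandsFiltration (wordProd H w) (max S₀ 1) (2 ^ k) :=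
    expandsFiltration_wordProd hexp (zero_le_one.trans (le_max_right _ _)) one_le_two
  exact ⟨⟨kC, (hkC kC le_rfl).1, fun k hk w => (hwords w).image_subset hR.le (hkC k hk).2⟩,
    ⟨kC, (hkC kC le_rfl).1, fun k hk w => (hwords w).inv_image_subset hR.le (hkC k hk).2⟩⟩

/-- for every compact `C ⊆ ℂ²` there is `k_C` so that every word of
length `k ≥ k_C` maps `C` into `V_R ∪ int(V_R^+)`, and a `k'_C` so that inverses of
words of length `k ≥ k'_C` map `C` into `V_R ∪ int(V_R^-)`. -/
theorem compact_absorption (n : ℕ) (hn : 0 < n)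
    (H : Fin n → Equiv.Perm (ℂ × ℂ)) (hH : ∀ i, IsHenon ⇑(H i)) :
    ∃ RS > (0 : ℝ), ∀ R > RS, ∀ C : Set (ℂ × ℂ), IsCompact C →
      (∃ kC : ℕ, 1 ≤ kC ∧ ∀ k ≥ kC, ∀ w : Fin k → Fin n,
        ⇑(wordProd H w) '' C ⊆ VR R ∪ interior (VRp R)) ∧
      (∃ kC' : ℕ, 1 ≤ kC' ∧ ∀ k ≥ kC', ∀ w : Fin k → Fin n,
        ⇑(wordProd H w)⁻¹ '' C ⊆ VR R ∪ interior (VRm R)) :=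
  compact_absorption_general n H hH
end
end

section
/- Let p(x,y) be a nonconstant polynomial and S a finitely generated Hénon semigroup. Then there exists k₀ ≥ 1 such that for every h ∈ G_k with k ≥ k₀, the polynomial p ∘ h has the form p∘h(x,y) = c · y^{deg(p∘h)} + (lower order terms), with c ≠ 0. -/
open Filter Metric Set Bornology

noncomputable section

/-!
Write `Q = Σ c_{ab} x^a y^b`. Composing with a generalized Hénon map `(x, y) ↦ (y, p(y) - A x)`,
`deg p = d`, `lc p = L`, turns `Q` into a sum of terms `x^j y^v` with `d j + v ≤ λ`, where `λ` is
the largest weight `a + d b` of a term of `Q`; on the line `d j + v = λ` the coefficient of `x^j`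
is `(-A)^j` times the `j`-th Taylor coefficient at `L` of `g(Y) = Σ_{a + d b = λ} c_{ab} Y^b`.
Hence the term at `x^j` with `j` the order of vanishing of `g` at `L` survives, a corner of
maximal `(d, 1)`-weight, and since `L ≠ 0` this order is smaller than the number of terms of `g`.
A corner at `x^j` confines the leading terms of any weight `a + i b`, `i ≥ 2`, to `a ≤ j` with `a`
in a fixed class mod `i`: there are at most `j / i + 1` of them, so the next generalized Hénon map
yields a corner at `x^j'` with `j' ≤ j / 2`. After as many generalized Hénon maps as `P` has
terms the corner is `y^λ`, which beats every other term in total degree.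
-/

open Polynomial

namespace Polynomial

theorem coeff_C_mul_X_add_C_pow {R : Type*} [CommSemiring R] (r s : R) (n k : ℕ) :
    ((C s * X + C r) ^ n).coeff k = r ^ (n - k) * n.choose k * s ^ k := by
  rw [show (C s * X + C r) ^ n = ((X + C r) ^ n).comp (C s * X) by simp [add_comp],
    comp_C_mul_X_coeff, coeff_X_add_C_pow]

section CharZero

variable {K : Type*} [Field K] [CharZero K]

theorem coeff_X_mul_derivative_sub_C_mul (g : K[X]) (e b : ℕ) :
    (X * derivative g - C (e : K) * g).coeff b = ((b : K) - e) * g.coeff b := by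
  cases b with
  | zero => simp
  | succ b => simp only [coeff_sub, coeff_X_mul, coeff_derivative, coeff_C_mul]; push_cast; ring

theorem support_X_mul_derivative_sub_C_mul (g : K[X]) (e : ℕ) :
    (X * derivative g - C (e : K) * g).support = g.support.erase e := by
  ext b
  simp only [mem_support_iff, Finset.mem_erase, coeff_X_mul_derivative_sub_C_mul, ne_eq,
    mul_eq_zero, sub_eq_zero, Nat.cast_inj, not_or]

theorem rootMultiplicity_lt_card_support {L : K} (hL : L ≠ 0) {g : K[X]} (hg : g ≠ 0) :
    g.rootMultiplicity L < g.support.card := by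
  induction hn : g.support.card using Nat.strong_induction_on generalizing g with
  | _ n ih =>
  obtain ⟨e, he⟩ := nonempty_support_iff.mpr hg
  have hn0 : 0 < n := hn ▸ Finset.card_pos.mpr ⟨e, he⟩
  -- `h` has one term fewer than `g`, and its order of vanishing at `L` is at most one less.
  set h := X * derivative g - C (e : K) * g
  have hcard : h.support.card = n - 1 := by
    rw [support_X_mul_derivative_sub_C_mul, Finset.card_erase_of_mem he, hn]
  by_cases hroot : g.rootMultiplicity L = 0
  · rwa [hroot]
  have hh : h ≠ 0 := by
    intro h0
    obtain ⟨k, x, hx, rfl⟩ : ∃ (k : ℕ) (x : K) (_ : x ≠ 0), g = C x * X ^ k := by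
      rw [← card_support_eq_one, hn]
      rw [h0, support_zero, Finset.card_empty] at hcard
      omega
    exact hroot (rootMultiplicity_eq_zero (by simp [hx, hL]))
  have hdvd : (X - C L) ^ (g.rootMultiplicity L - 1) ∣ h :=
    dvd_sub ((pow_sub_one_dvd_derivative_of_pow_dvd (pow_rootMultiplicity_dvd g L)).mul_left _)
      (((pow_dvd_pow _ (Nat.sub_le _ 1)).trans (pow_rootMultiplicity_dvd g L)).mul_left _)
  have := (le_rootMultiplicity_iff hh).mpr hdvd
  have := ih _ (by omega) hh hcard
  omega

end CharZero

end Polynomial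

theorem List.foldr_comp_id_append {α : Type*} (l₁ l₂ : List (α → α)) :
    (l₁ ++ l₂).foldr (· ∘ ·) id = l₁.foldr (· ∘ ·) id ∘ l₂.foldr (· ∘ ·) id := by
  induction l₁ with
  | nil => rfl
  | cons f l₁ ih => simp [ih, Function.comp_assoc]

namespace HenonLeadingTerm

-- `Q : Poly2` stands for `Σ coeff2 Q a b * x ^ a * y ^ b`: the outer variable is `x`.
abbrev Poly2 := ℂ[X][X]

def coeff2 (Q : Poly2) (a b : ℕ) : ℂ := (Q.coeff a).coeff b

def support2 (Q : Poly2) : Finset (ℕ × ℕ) :=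
  Q.support.biUnion fun a => (Q.coeff a).support.map (Function.Embedding.sectR a ℕ)

theorem mem_support2_iff {Q : Poly2} {z : ℕ × ℕ} :
    z ∈ support2 Q ↔ z.1 ∈ Q.support ∧ z.2 ∈ (Q.coeff z.1).support := by
  simp only [support2, Finset.mem_biUnion, Finset.mem_map, Function.Embedding.sectR]
  constructor
  · rintro ⟨a, ha, b, hb, rfl⟩
    exact ⟨ha, hb⟩
  · rintro ⟨ha, hb⟩
    exact ⟨z.1, ha, z.2, hb, rfl⟩

theorem mem_support2 {Q : Poly2} {z : ℕ × ℕ} : z ∈ support2 Q ↔ coeff2 Q z.1 z.2 ≠ 0 := by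
  rw [mem_support2_iff, coeff2, mem_support_iff, mem_support_iff, and_iff_right_iff_imp]
  exact fun h h0 => h (by rw [h0, coeff_zero])

theorem sum_support2 {M : Type*} [AddCommMonoid M] (Q : Poly2) (F : ℕ × ℕ → M) :
    ∑ z ∈ support2 Q, F z = ∑ a ∈ Q.support, ∑ b ∈ (Q.coeff a).support, F (a, b) :=
  Finset.sum_finset_product _ _ _ fun _ => mem_support2_iff

def evalAt (z : ℂ × ℂ) : Poly2 →+* ℂ := eval₂RingHom (evalRingHom z.2) z.1

def henonComp (A : ℂ) (p : ℂ[X]) : Poly2 →+* Poly2 :=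
  eval₂RingHom (eval₂RingHom (C.comp C) (C (C (-A)) * X + C p)) (C X)

theorem evalAt_henonComp (A : ℂ) (p : ℂ[X]) (z : ℂ × ℂ) (Q : Poly2) :
    evalAt z (henonComp A p Q) = evalAt (z.2, p.eval z.2 - A * z.1) Q := by
  rw [← RingHom.comp_apply]
  congr 1
  ext <;> simp [evalAt, henonComp]
  ring

theorem coeff_henonComp (A : ℂ) (p : ℂ[X]) (Q : Poly2) (j : ℕ) :
    (henonComp A p Q).coeff j = ∑ z ∈ support2 Q,
      C (coeff2 Q z.1 z.2 * z.2.choose j * (-A) ^ j) * (X ^ z.1 * p ^ (z.2 - j)) := by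
  rw [sum_support2, henonComp, coe_eval₂RingHom, eval₂_eq_sum, Polynomial.sum_def,
    finsetSum_coeff]
  refine Finset.sum_congr rfl fun a _ => ?_
  rw [coe_eval₂RingHom, eval₂_eq_sum, Polynomial.sum_def, Finset.sum_mul, finsetSum_coeff]
  refine Finset.sum_congr rfl fun b _ => ?_
  rw [← map_pow, coeff_mul_C, RingHom.comp_apply, coeff_C_mul, coeff_C_mul_X_add_C_pow]
  simp only [coeff2, map_mul, map_pow, map_natCast]
  ring

theorem coeff2_henonComp (A : ℂ) (p : ℂ[X]) (Q : Poly2) (j v : ℕ) :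
    coeff2 (henonComp A p Q) j v = ∑ z ∈ support2 Q,
      coeff2 Q z.1 z.2 * z.2.choose j * (-A) ^ j * (X ^ z.1 * p ^ (z.2 - j)).coeff v := by
  simp only [coeff2, coeff_henonComp, finsetSum_coeff, coeff_C_mul]

def weightedDeg (i : ℕ) (Q : Poly2) : ℕ := (support2 Q).sup fun z => z.1 + i * z.2

theorem le_weightedDeg {i : ℕ} {Q : Poly2} {z : ℕ × ℕ} (hz : z ∈ support2 Q) :
    z.1 + i * z.2 ≤ weightedDeg i Q :=
  Finset.le_sup (f := fun z : ℕ × ℕ => z.1 + i * z.2) hz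

theorem mul_fst_add_snd_le_of_mem_henonComp {A : ℂ} {p : ℂ[X]} {Q : Poly2} {z : ℕ × ℕ}
    (hz : z ∈ support2 (henonComp A p Q)) :
    p.natDegree * z.1 + z.2 ≤ weightedDeg p.natDegree Q := by
  rw [mem_support2, coeff2_henonComp] at hz
  obtain ⟨w, hw, hterm⟩ := Finset.exists_ne_zero_of_sum_ne_zero hz
  have hchoose : z.1 ≤ w.2 := by
    by_contra! h
    simp [Nat.choose_eq_zero_of_lt h] at hterm
  have hdeg : z.2 ≤ w.1 + p.natDegree * (w.2 - z.1) :=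
    calc z.2 ≤ (X ^ w.1 * p ^ (w.2 - z.1)).natDegree :=
          le_natDegree_of_ne_zero (right_ne_zero_of_mul hterm)
      _ ≤ w.1 + (w.2 - z.1) * p.natDegree :=
          natDegree_mul_le.trans (add_le_add (natDegree_X_pow_le _) (natDegree_pow_le))
      _ = w.1 + p.natDegree * (w.2 - z.1) := by rw [mul_comm]
  have := le_weightedDeg (i := p.natDegree) hw
  rw [Nat.mul_sub] at hdeg
  have := Nat.mul_le_mul_left p.natDegree hchoose
  omega

def topSupport (i : ℕ) (Q : Poly2) : Finset (ℕ × ℕ) :=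
  (support2 Q).filter fun z => z.1 + i * z.2 = weightedDeg i Q

theorem mem_topSupport {i : ℕ} {Q : Poly2} {z : ℕ × ℕ} :
    z ∈ topSupport i Q ↔ z ∈ support2 Q ∧ z.1 + i * z.2 = weightedDeg i Q :=
  Finset.mem_filter

theorem topSupport_nonempty (i : ℕ) {Q : Poly2} (hQ : (support2 Q).Nonempty) :
    (topSupport i Q).Nonempty := by
  obtain ⟨z, hz, hmax⟩ := Finset.exists_mem_eq_sup _ hQ fun z : ℕ × ℕ => z.1 + i * z.2
  exact ⟨z, mem_topSupport.mpr ⟨hz, hmax.symm⟩⟩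

theorem eq_of_mem_topSupport {i : ℕ} {Q : Poly2} {z w : ℕ × ℕ} (hz : z ∈ topSupport i Q)
    (hw : w ∈ topSupport i Q) (h : z.2 = w.2) : z = w := by
  rw [mem_topSupport] at hz hw
  exact Prod.ext (by rw [h] at hz; omega) h

def leadingPoly (i : ℕ) (Q : Poly2) : ℂ[X] :=
  ∑ z ∈ topSupport i Q, C (coeff2 Q z.1 z.2) * X ^ z.2

theorem coeff_leadingPoly (i : ℕ) (Q : Poly2) (b : ℕ) :
    (leadingPoly i Q).coeff b = ∑ z ∈ topSupport i Q, if b = z.2 then coeff2 Q z.1 z.2 else 0 := by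
  simp only [leadingPoly, finsetSum_coeff, coeff_C_mul_X_pow]

theorem leadingPoly_ne_zero (i : ℕ) {Q : Poly2} (hQ : (support2 Q).Nonempty) :
    leadingPoly i Q ≠ 0 := by
  obtain ⟨z, hz⟩ := topSupport_nonempty i hQ
  intro h0
  have h := coeff_leadingPoly i Q z.2
  rw [h0, coeff_zero, Finset.sum_eq_single z, if_pos rfl] at h
  · exact mem_support2.mp (mem_topSupport.mp hz).1 h.symm
  · exact fun w hw hwz => if_neg fun h => hwz (eq_of_mem_topSupport hw hz h.symm)
  · exact fun h => absurd hz h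

theorem support_leadingPoly_subset (i : ℕ) (Q : Poly2) :
    (leadingPoly i Q).support ⊆ (topSupport i Q).image Prod.snd := by
  intro b hb
  rw [mem_support_iff, coeff_leadingPoly] at hb
  obtain ⟨z, hz, hb⟩ := Finset.exists_ne_zero_of_sum_ne_zero hb
  exact Finset.mem_image.mpr ⟨z, hz, by_contra fun h => hb (if_neg fun h' => h h'.symm)⟩

theorem card_support_leadingPoly_le (i : ℕ) (Q : Poly2) :
    (leadingPoly i Q).support.card ≤ (topSupport i Q).card :=
  (Finset.card_le_card (support_leadingPoly_subset i Q)).trans Finset.card_image_le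

theorem mul_natDegree_leadingPoly_le (i : ℕ) (Q : Poly2) :
    i * (leadingPoly i Q).natDegree ≤ weightedDeg i Q := by
  by_cases h0 : leadingPoly i Q = 0
  · simp [h0]
  obtain ⟨z, hz, hdeg⟩ := Finset.mem_image.mp
    (support_leadingPoly_subset i Q (natDegree_mem_support_of_nonzero h0))
  have := (mem_topSupport.mp hz).2
  rw [← hdeg]
  omega

theorem coeff_leadingPoly_comp (i : ℕ) (Q : Poly2) (L : ℂ) (j : ℕ) :
    ((leadingPoly i Q).comp (X + C L)).coeff j =
      ∑ z ∈ topSupport i Q, coeff2 Q z.1 z.2 * (L ^ (z.2 - j) * z.2.choose j) := by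
  simp only [leadingPoly, sum_comp, mul_comp, C_comp, X_pow_comp, finsetSum_coeff, coeff_C_mul,
    coeff_X_add_C_pow]

theorem coeff2_henonComp_leadingPoly (A : ℂ) {p : ℂ[X]} (hp : p ≠ 0) (Q : Poly2) {j : ℕ}
    (hj : p.natDegree * j ≤ weightedDeg p.natDegree Q) :
    coeff2 (henonComp A p Q) j (weightedDeg p.natDegree Q - p.natDegree * j) =
      (-A) ^ j * ((leadingPoly p.natDegree Q).comp (X + C p.leadingCoeff)).coeff j := by
  set d := p.natDegree
  have hdeg (a k : ℕ) : (X ^ a * p ^ k).natDegree = a + d * k := by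
    rw [natDegree_mul (by simp) (pow_ne_zero _ hp), natDegree_X_pow, natDegree_pow, mul_comm]
  have hlead (a k : ℕ) : (X ^ a * p ^ k).leadingCoeff = p.leadingCoeff ^ k := by
    simp [leadingCoeff_mul]
  rw [coeff2_henonComp, coeff_leadingPoly_comp, Finset.mul_sum]
  refine (Finset.sum_subset (Finset.filter_subset _ _) fun z hz hztop => ?_).symm.trans
    (Finset.sum_congr rfl fun z hz => ?_)
  · have hlt : z.1 + d * z.2 < weightedDeg d Q :=
      (le_weightedDeg hz).lt_of_ne fun h => hztop (mem_topSupport.mpr ⟨hz, h⟩)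
    by_cases hjz : j ≤ z.2
    · rw [coeff_eq_zero_of_natDegree_lt, mul_zero]
      rw [hdeg, Nat.mul_sub]
      have := Nat.mul_le_mul_left d hjz
      omega
    · simp [Nat.choose_eq_zero_of_lt (not_le.mp hjz)]
  · have hline := (mem_topSupport.mp hz).2
    by_cases hjz : j ≤ z.2
    · have hv : weightedDeg d Q - d * j = (X ^ z.1 * p ^ (z.2 - j)).natDegree := by
        rw [hdeg, Nat.mul_sub]
        have := Nat.mul_le_mul_left d hjz
        omega
      rw [hv, coeff_natDegree, hlead]
      ring
    · simp [Nat.choose_eq_zero_of_lt (not_le.mp hjz)]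

def HasCorner (Q : Poly2) (j : ℕ) : Prop :=
  ∃ d v, 2 ≤ d ∧ 0 < j + v ∧ coeff2 Q j v ≠ 0 ∧ ∀ z ∈ support2 Q, d * z.1 + z.2 ≤ d * j + v

theorem pos_weightedDeg {i : ℕ} (hi : i ≠ 0) {Q : Poly2} {z : ℕ × ℕ} (hz : z ∈ support2 Q)
    (hz0 : 0 < z.1 + z.2) : 0 < weightedDeg i Q := by
  refine lt_of_lt_of_le ?_ (le_weightedDeg hz)
  rcases Nat.eq_zero_or_pos z.1 with h | h
  · exact Nat.add_pos_right _ (Nat.mul_pos (Nat.pos_of_ne_zero hi) (by omega))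
  · exact Nat.add_pos_left h _

theorem HasCorner.pos_weightedDeg {Q : Poly2} {j : ℕ} (hQ : HasCorner Q j) {i : ℕ} (hi : i ≠ 0) :
    0 < weightedDeg i Q := by
  obtain ⟨d, v, -, hpos, hjv, -⟩ := hQ
  exact HenonLeadingTerm.pos_weightedDeg hi (mem_support2 (z := (j, v)) |>.mpr hjv) hpos

theorem exists_hasCorner_henonComp {A : ℂ} (hA : A ≠ 0) {p : ℂ[X]} (hp : 2 ≤ p.natDegree)
    {Q : Poly2} (hQ : 0 < weightedDeg p.natDegree Q) :
    ∃ j < (topSupport p.natDegree Q).card, HasCorner (henonComp A p Q) j := by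
  have hp0 : p ≠ 0 := by rintro rfl; simp at hp
  have hQ0 : (support2 Q).Nonempty := by
    rw [Finset.nonempty_iff_ne_empty]
    rintro h
    simp [weightedDeg, h] at hQ
  set g := leadingPoly p.natDegree Q
  have hg : g ≠ 0 := leadingPoly_ne_zero _ hQ0
  have hcoeff : (g.comp (X + C p.leadingCoeff)).coeff (g.rootMultiplicity p.leadingCoeff) ≠ 0 := by
    rw [rootMultiplicity_eq_natTrailingDegree]
    exact mt trailingCoeff_eq_zero.mp (comp_X_add_C_ne_zero_iff.mpr hg)
  have hlt := (rootMultiplicity_lt_card_support (leadingCoeff_ne_zero.mpr hp0) hg).trans_le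
    (card_support_leadingPoly_le _ Q)
  generalize g.rootMultiplicity p.leadingCoeff = j at hcoeff hlt
  have hj : p.natDegree * j ≤ weightedDeg p.natDegree Q := by
    have : j ≤ g.natDegree := by
      simpa [natDegree_comp] using le_natDegree_of_ne_zero hcoeff
    exact (Nat.mul_le_mul_left _ this).trans (mul_natDegree_leadingPoly_le _ Q)
  refine ⟨j, hlt, p.natDegree, weightedDeg p.natDegree Q - p.natDegree * j,
    hp, ?_, ?_, fun z hz => ?_⟩
  · rcases Nat.eq_zero_or_pos j with rfl | hj0 <;> omega
  · rw [coeff2_henonComp_leadingPoly A hp0 Q hj]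
    exact mul_ne_zero (pow_ne_zero _ (neg_ne_zero.mpr hA)) hcoeff
  · have := mul_fst_add_snd_le_of_mem_henonComp hz
    omega

theorem HasCorner.card_topSupport_le {Q : Poly2} {j : ℕ} (hQ : HasCorner Q j) {i : ℕ} (hi : 2 ≤ i) :
    (topSupport i Q).card ≤ j / i + 1 := by
  obtain ⟨d, v, hd, -, hjv, hmax⟩ := hQ
  have hcorner := le_weightedDeg (i := i) (mem_support2 (z := (j, v)) |>.mpr hjv)
  have hfst : ∀ z ∈ topSupport i Q, z.1 ≤ j := by
    intro z hz
    obtain ⟨hz, hline⟩ := mem_topSupport.mp hz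
    have h1 := Nat.mul_le_mul_left i (hmax z hz)
    have h4 : 2 * 2 ≤ i * d := Nat.mul_le_mul hi hd
    by_contra! hlt
    nlinarith
  have hmod : ∀ z ∈ topSupport i Q, z.1 % i = weightedDeg i Q % i := by
    intro z hz
    rw [← (mem_topSupport.mp hz).2, Nat.add_mul_mod_self_left]
  calc (topSupport i Q).card ≤ (Finset.range (j / i + 1)).card := by
        refine Finset.card_le_card_of_injOn (fun z => z.1 / i) (fun z hz => ?_)
          fun z hz w hw h => ?_
        · exact Finset.mem_range.mpr (Nat.lt_succ_of_le (Nat.div_le_div_right (hfst z hz)))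
        · have h1 : z.1 = w.1 := by
            rw [← Nat.div_add_mod z.1 i, ← Nat.div_add_mod w.1 i, hmod z hz, hmod w hw]
            exact congrArg (i * · + _) h
          have hz' := (mem_topSupport.mp hz).2
          have hw' := (mem_topSupport.mp hw).2
          refine Prod.ext h1 (Nat.eq_of_mul_eq_mul_left (by omega : 0 < i) ?_)
          omega
    _ = j / i + 1 := Finset.card_range _

theorem HasCorner.exists_henonComp {Q : Poly2} {j : ℕ} (hQ : HasCorner Q j) {A : ℂ} (hA : A ≠ 0)
    {p : ℂ[X]} (hp : 2 ≤ p.natDegree) : ∃ j' ≤ j / 2, HasCorner (henonComp A p Q) j' := by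
  obtain ⟨j', hj', hcorner⟩ := exists_hasCorner_henonComp hA hp (hQ.pos_weightedDeg (by omega))
  have := hQ.card_topSupport_le hp
  have := Nat.div_le_div_left hp two_pos (a := j)
  exact ⟨j', by omega, hcorner⟩

def toMvPolynomial : Poly2 →+* MvPolynomial (Fin 2) ℂ :=
  eval₂RingHom (eval₂RingHom MvPolynomial.C (MvPolynomial.X 1)) (MvPolynomial.X 0)

def ofMvPolynomial : MvPolynomial (Fin 2) ℂ →+* Poly2 :=
  MvPolynomial.eval₂Hom (C.comp C) ![X, C X]

theorem toMvPolynomial_ofMvPolynomial (P : MvPolynomial (Fin 2) ℂ) :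
    toMvPolynomial (ofMvPolynomial P) = P := by
  rw [← RingHom.comp_apply]
  conv_rhs => rw [← RingHom.id_apply P]
  congr 1
  ext i
  · simp [toMvPolynomial, ofMvPolynomial]
  · fin_cases i <;> simp [toMvPolynomial, ofMvPolynomial]

theorem eval_toMvPolynomial (z : ℂ × ℂ) (Q : Poly2) :
    MvPolynomial.eval ![z.1, z.2] (toMvPolynomial Q) = evalAt z Q := by
  rw [← RingHom.comp_apply]
  congr 1
  ext <;> simp [toMvPolynomial, evalAt]

theorem toMvPolynomial_eq_sum (Q : Poly2) :
    toMvPolynomial Q = ∑ z ∈ support2 Q,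
      MvPolynomial.C (coeff2 Q z.1 z.2) * MvPolynomial.X 1 ^ z.2 * MvPolynomial.X 0 ^ z.1 := by
  rw [sum_support2, toMvPolynomial, coe_eval₂RingHom, eval₂_eq_sum, Polynomial.sum_def]
  refine Finset.sum_congr rfl fun a _ => ?_
  rw [coe_eval₂RingHom, eval₂_eq_sum, Polynomial.sum_def, Finset.sum_mul]
  rfl

theorem totalDegree_toMvPolynomial_le {Q : Poly2} {D : ℕ} (h : ∀ z ∈ support2 Q, z.1 + z.2 ≤ D) :
    (toMvPolynomial Q).totalDegree ≤ D := by
  rw [toMvPolynomial_eq_sum]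
  refine (MvPolynomial.totalDegree_finsetSum _ _).trans (Finset.sup_le fun z hz => ?_)
  refine (MvPolynomial.totalDegree_mul _ _).trans ?_
  refine (Nat.add_le_add_right (MvPolynomial.totalDegree_mul _ _) _).trans ?_
  simp only [MvPolynomial.totalDegree_C, MvPolynomial.totalDegree_X_pow]
  have := h z hz
  omega

theorem HasCorner.exists_eq_C_mul_pow_add {Q : Poly2} (hQ : HasCorner Q 0) :
    ∃ (c : ℂ) (N : ℕ) (q : MvPolynomial (Fin 2) ℂ), c ≠ 0 ∧ q.totalDegree < N ∧
      ∀ z : ℂ × ℂ, evalAt z Q = c * z.2 ^ N + MvPolynomial.eval ![z.1, z.2] q := by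
  obtain ⟨d, N, hd, hN, hc, hmax⟩ := hQ
  set R := Q - C (monomial N (coeff2 Q 0 N))
  have hR : ∀ z ∈ support2 R, z.1 + z.2 ≤ N - 1 := by
    rintro ⟨a, b⟩ hz
    rw [mem_support2] at hz
    have hab : a = 0 → b ≠ N := by
      rintro rfl rfl
      exact hz (by simp [R, coeff2])
    have hzQ : coeff2 Q a b ≠ 0 := by
      refine fun h0 => hz ?_
      simp only [R, coeff2, coeff_sub, coeff_C] at h0 ⊢
      split_ifs <;> simp_all [Polynomial.coeff_monomial]
    have hle : d * a + b ≤ d * 0 + N := hmax _ (mem_support2 (z := (a, b)) |>.mpr hzQ)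
    rcases Nat.eq_zero_or_pos a with rfl | ha
    · simp_all
      omega
    · have := Nat.mul_le_mul_right a hd
      dsimp only
      omega
  refine ⟨coeff2 Q 0 N, N, toMvPolynomial R, hc, ?_, fun z => ?_⟩
  · have := totalDegree_toMvPolynomial_le hR
    omega
  · rw [eval_toMvPolynomial, map_sub, evalAt]
    simp

theorem _root_.IsGenHenonDeg.exists_henonComp {g : ℂ × ℂ → ℂ × ℂ} {d : ℕ} (hg : IsGenHenonDeg g d) :
    ∃ (A : ℂ) (p : ℂ[X]), A ≠ 0 ∧ 2 ≤ p.natDegree ∧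
      ∀ z Q, evalAt (g z) Q = evalAt z (henonComp A p Q) := by
  obtain ⟨A, p, hA, hp, -, hg⟩ := hg
  exact ⟨A, p, hA, hp, fun z Q => by rw [evalAt_henonComp, ← hg]⟩

theorem HasCorner.exists_foldr {l : List (ℂ × ℂ → ℂ × ℂ)} (hl : ∀ g ∈ l, ∃ d, IsGenHenonDeg g d)
    {Q : Poly2} {j : ℕ} (hQ : HasCorner Q j) :
    ∃ Q' j', j' ≤ j - l.length ∧ HasCorner Q' j' ∧
      ∀ z, evalAt (l.foldr (· ∘ ·) id z) Q = evalAt z Q' := by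
  induction l generalizing Q j with
  | nil => exact ⟨Q, j, by simp, hQ, fun z => rfl⟩
  | cons g l ih =>
    obtain ⟨d, hg⟩ := hl g List.mem_cons_self
    obtain ⟨A, p, hA, hp, hcomp⟩ := hg.exists_henonComp
    obtain ⟨j₁, hj₁, hQ₁⟩ := hQ.exists_henonComp hA hp
    obtain ⟨Q', j', hj', hQ', heval⟩ := ih (fun g hg => hl g (List.mem_cons_of_mem _ hg)) hQ₁
    refine ⟨Q', j', ?_, hQ', fun z => by rw [List.foldr_cons, Function.comp_apply, hcomp, heval]⟩
    simp only [List.length_cons]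
    omega

theorem exists_hasCorner_foldr {l : List (ℂ × ℂ → ℂ × ℂ)} (hl : ∀ g ∈ l, ∃ d, IsGenHenonDeg g d)
    (hl₀ : l ≠ []) {Q : Poly2} {z₀ : ℕ × ℕ} (hz₀ : z₀ ∈ support2 Q) (hz₀0 : 0 < z₀.1 + z₀.2) :
    ∃ Q' j, j ≤ (support2 Q).card - l.length ∧ HasCorner Q' j ∧
      ∀ z, evalAt (l.foldr (· ∘ ·) id z) Q = evalAt z Q' := by
  obtain ⟨g, l, rfl⟩ := List.exists_cons_of_ne_nil hl₀
  obtain ⟨d, hg⟩ := hl g List.mem_cons_self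
  obtain ⟨A, p, hA, hp, hcomp⟩ := hg.exists_henonComp
  obtain ⟨j₁, hj₁, hQ₁⟩ :=
    exists_hasCorner_henonComp hA hp (pos_weightedDeg (by omega) hz₀ hz₀0)
  have : (topSupport p.natDegree Q).card ≤ (support2 Q).card :=
    Finset.card_le_card (Finset.filter_subset _ _)
  obtain ⟨Q', j', hj', hQ', heval⟩ := hQ₁.exists_foldr fun g hg => hl g (List.mem_cons_of_mem _ hg)
  refine ⟨Q', j', ?_, hQ', fun z => by rw [List.foldr_cons, Function.comp_apply, hcomp, heval]⟩
  simp only [List.length_cons]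
  omega

theorem exists_foldr_eq_wordProd {n : ℕ} (H : Fin n → Equiv.Perm (ℂ × ℂ))
    (hH : ∀ i, IsHenon ⇑(H i)) {k : ℕ} (w : Fin k → Fin n) :
    ∃ l : List (ℂ × ℂ → ℂ × ℂ), k ≤ l.length ∧ (∀ g ∈ l, ∃ d, IsGenHenonDeg g d) ∧
      ⇑(wordProd H w) = l.foldr (· ∘ ·) id := by
  induction k with
  | zero => exact ⟨[], le_rfl, by simp, by simp [wordProd]⟩
  | succ k ih =>
    obtain ⟨l, hkl, hl, hw⟩ := ih (w ∘ Fin.succ)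
    obtain ⟨-, l₀, hl₀, hgen, hH₀, -⟩ := hH (w 0)
    refine ⟨l₀.map Prod.fst ++ l, ?_, ?_, ?_⟩
    · simp only [List.length_append, List.length_map]
      have := List.length_pos_of_ne_nil hl₀
      omega
    · simp only [List.mem_append, List.mem_map]
      rintro g (⟨gd, hgd, rfl⟩ | hg)
      exacts [⟨gd.2, hgen gd hgd⟩, hl g hg]
    · rw [List.foldr_comp_id_append, ← hH₀, ← hw, wordProd, wordProd, List.ofFn_succ,
        List.prod_cons, Equiv.Perm.coe_mul]
      rfl

end HenonLeadingTerm

open HenonLeadingTerm in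
theorem leading_term_pure_power_general (n : ℕ)
    (H : Fin n → Equiv.Perm (ℂ × ℂ)) (hH : ∀ i, IsHenon ⇑(H i))
    (P : MvPolynomial (Fin 2) ℂ) (hP : 0 < P.totalDegree) :
    ∃ k₀ : ℕ, 1 ≤ k₀ ∧ ∀ k ≥ k₀, ∀ w : Fin k → Fin n,
      ∃ (c : ℂ) (N : ℕ) (q : MvPolynomial (Fin 2) ℂ),
        c ≠ 0 ∧ q.totalDegree < N ∧
        ∀ x y : ℂ,
          MvPolynomial.eval ![(wordProd H w (x, y)).1, (wordProd H w (x, y)).2] P =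
            c * y ^ N + MvPolynomial.eval ![x, y] q := by
  set Q := ofMvPolynomial P
  have hQP (z : ℂ × ℂ) : evalAt z Q = MvPolynomial.eval ![z.1, z.2] P := by
    rw [← eval_toMvPolynomial, toMvPolynomial_ofMvPolynomial]
  obtain ⟨z₀, hz₀, hz₀0⟩ : ∃ z ∈ support2 Q, 0 < z.1 + z.2 := by
    by_contra! h
    have := totalDegree_toMvPolynomial_le h
    rw [toMvPolynomial_ofMvPolynomial] at this
    omega
  have hcard : 0 < (support2 Q).card := Finset.card_pos.mpr ⟨z₀, hz₀⟩
  refine ⟨(support2 Q).card, hcard, fun k hk w => ?_⟩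
  obtain ⟨l, hkl, hl, hw⟩ := exists_foldr_eq_wordProd H hH w
  have hl₀ : l ≠ [] := by
    rintro rfl
    simp only [List.length_nil] at hkl
    omega
  obtain ⟨Q', j, hj, hQ', heval⟩ := exists_hasCorner_foldr hl hl₀ hz₀ hz₀0
  obtain rfl : j = 0 := by omega
  obtain ⟨c, N, q, hc, hq, hQ'eq⟩ := hQ'.exists_eq_C_mul_pow_add
  refine ⟨c, N, q, hc, hq, fun x y => ?_⟩
  rw [← hQP, hw, heval, hQ'eq]

/-- for any nonconstant polynomial `P` on ℂ² and a finitely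
generated Hénon semigroup, there is `k₀ ≥ 1` so that for every word `h` of length
`k ≥ k₀`, `P ∘ h (x,y) = c · y^N + (lower order terms)` with `c ≠ 0`,
`N = deg (P ∘ h)`. -/
theorem leading_term_pure_power (n : ℕ) (hn : 0 < n)
    (H : Fin n → Equiv.Perm (ℂ × ℂ)) (hH : ∀ i, IsHenon ⇑(H i))
    (P : MvPolynomial (Fin 2) ℂ) (hP : 0 < P.totalDegree) :
    ∃ k₀ : ℕ, 1 ≤ k₀ ∧ ∀ k ≥ k₀, ∀ w : Fin k → Fin n,
      ∃ (c : ℂ) (N : ℕ) (q : MvPolynomial (Fin 2) ℂ),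
        c ≠ 0 ∧ q.totalDegree < N ∧
        ∀ x y : ℂ,
          MvPolynomial.eval ![(wordProd H w (x, y)).1, (wordProd H w (x, y)).2] P =
            c * y ^ N + MvPolynomial.eval ![x, y] q :=
  leading_term_pure_power_general n H hH P hP
end
end
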